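/- arXiv:2511.15623 — 5 statements merged into one kernel-verified Lean document; each statement's English description precedes it below -/
import Mathlib

section
/- Let D = Dⁿ ∪ Dˣ be a database instance, Q a Boolean monotone query with Q(D), and t ∈ Dⁿ. Then t belongs to some minimal sufficient-set for Q in D if and only if t belongs to some minimal necessary-set for Q in D (i.e., iff t is a necessary tuple). -/
open Classical

variable {α : Type*} [DecidableEq α]

/-- `N` is a necessary-set: `N ⊆ Dⁿ` and `¬ Q(D ∖ N)` where `D = Dⁿ ∪ Dˣ`. -/
def NecessarySet (Q : Finset α → Prop) (Dn Dx : Finset α) (N : Finset α) : Prop :=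
  N ⊆ Dn ∧ ¬ Q ((Dn ∪ Dx) \ N)

/-- Minimal necessary-set (MNS). -/
def MNS (Q : Finset α → Prop) (Dn Dx : Finset α) (N : Finset α) : Prop :=
  NecessarySet Q Dn Dx N ∧ ∀ N' ⊂ N, ¬ NecessarySet Q Dn Dx N'

/-- `S` is a sufficient-set: `S ⊆ Dⁿ` and `Q(S ∪ Dˣ)`. -/
def SufficientSet (Q : Finset α → Prop) (Dn Dx : Finset α) (S : Finset α) : Prop :=
  S ⊆ Dn ∧ Q (S ∪ Dx)

/-- Minimal sufficient-set (MSS). -/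
def MSS (Q : Finset α → Prop) (Dn Dx : Finset α) (S : Finset α) : Prop :=
  SufficientSet Q Dn Dx S ∧ ∀ S' ⊂ S, ¬ SufficientSet Q Dn Dx S'

/-- Any finset satisfying `P` contains a subset minimal for `P`. -/
lemma exists_minimal_subset (P : Finset α → Prop) :
    ∀ B : Finset α, P B → ∃ M, M ⊆ B ∧ P M ∧ ∀ M' ⊂ M, ¬ P M' := by
  intro B
  induction B using Finset.strongInductionOn with
  | _ B ih =>
    intro hB
    by_cases h : ∃ M' ⊂ B, P M'
    · obtain ⟨M', hsub, hP⟩ := h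
      obtain ⟨M, hMsub, hPM, hmin⟩ := ih M' hsub hP
      exact ⟨M, hMsub.trans hsub.subset, hPM, hmin⟩
    · push_neg at h
      exact ⟨B, subset_rfl, hB, h⟩

set_option maxHeartbeats 1000000 in
theorem stmt0 (Q : Finset α → Prop)
    (hmono : ∀ S₁ S₂ : Finset α, S₁ ⊆ S₂ → Q S₁ → Q S₂)
    (Dn Dx : Finset α) (hdisj : Disjoint Dn Dx)
    (hQ : Q (Dn ∪ Dx)) (t : α) (ht : t ∈ Dn) :
    (∃ S, MSS Q Dn Dx S ∧ t ∈ S) ↔ (∃ N, MNS Q Dn Dx N ∧ t ∈ N) := by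
  have htx : t ∉ Dx := fun h => (Finset.disjoint_left.mp hdisj ht) h
  -- criticality condition
  have crit_iff :
      (∃ S, MSS Q Dn Dx S ∧ t ∈ S) ↔
      (∃ A, A ⊆ Dn ∧ t ∈ A ∧ Q (A ∪ Dx) ∧ ¬ Q ((A \ {t}) ∪ Dx)) := by
    constructor
    · rintro ⟨S, ⟨⟨hSsub, hSQ⟩, hmin⟩, htS⟩
      refine ⟨S, hSsub, htS, hSQ, ?_⟩
      intro hbad
      exact hmin (S \ {t}) (Finset.sdiff_ssubset (by simpa using htS) (by simp))
        ⟨(Finset.sdiff_subset).trans hSsub, hbad⟩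
    · rintro ⟨A, hAsub, htA, hQA, hnQA⟩
      obtain ⟨S, hSA, ⟨hSsub, hSQ⟩, hmin⟩ :=
        exists_minimal_subset (fun X => SufficientSet Q Dn Dx X) A ⟨hAsub, hQA⟩
      have htS : t ∈ S := by
        by_contra hts
        have : S ⊆ A \ {t} := fun x hx => Finset.mem_sdiff.mpr
          ⟨hSA hx, by simp; rintro rfl; exact hts hx⟩
        exact hnQA (hmono _ _ (Finset.union_subset_union_left this) hSQ)
      exact ⟨S, ⟨⟨hSsub, hSQ⟩, hmin⟩, htS⟩
  rw [crit_iff]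
  constructor
  · rintro ⟨A, hAsub, htA, hQA, hnQA⟩
    -- N₀ := (Dn \ A) ∪ {t} is necessary
    have hN0sub : (Dn \ A) ∪ {t} ⊆ Dn := by
      apply Finset.union_subset Finset.sdiff_subset (by simpa using ht)
    have hcompl : (Dn ∪ Dx) \ ((Dn \ A) ∪ {t}) = (A \ {t}) ∪ Dx := by
      ext x
      have hx1 : x ∈ A → x ∈ Dn := fun h => hAsub h
      have hx2 : x ∈ Dx → x ∉ Dn := fun h h' => Finset.disjoint_left.mp hdisj h' h
      have hx4 : x = t → x ∉ Dx := fun h => h ▸ htx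
      simp only [Finset.mem_sdiff, Finset.mem_union, Finset.mem_singleton]
      tauto
    have hN0 : NecessarySet Q Dn Dx ((Dn \ A) ∪ {t}) := by
      refine ⟨hN0sub, ?_⟩
      rw [hcompl]; exact hnQA
    obtain ⟨N, hNsub, hNnec, hNmin⟩ :=
      exists_minimal_subset (fun X => NecessarySet Q Dn Dx X) _ hN0
    have htN : t ∈ N := by
      by_contra hts
      have hNA : ∀ x ∈ N, x ∉ A := by
        intro x hx hxA
        rcases Finset.mem_union.mp (hNsub hx) with h | h
        · exact (Finset.mem_sdiff.mp h).2 hxA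
        · exact hts (by rwa [Finset.mem_singleton.mp h] at hx)
      have : A ∪ Dx ⊆ (Dn ∪ Dx) \ N := by
        intro x hx
        rcases Finset.mem_union.mp hx with h | h
        · exact Finset.mem_sdiff.mpr ⟨Finset.mem_union.mpr (Or.inl (hAsub h)), fun hxN => hNA x hxN h⟩
        · exact Finset.mem_sdiff.mpr ⟨Finset.mem_union.mpr (Or.inr h),
            fun hxN => Finset.disjoint_right.mp hdisj h (hNnec.1 hxN)⟩
      exact hNnec.2 (hmono _ _ this hQA)
    exact ⟨N, ⟨hNnec, hNmin⟩, htN⟩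
  · rintro ⟨N, ⟨⟨hNsub, hNnec⟩, hNmin⟩, htN⟩
    refine ⟨(Dn \ N) ∪ {t}, Finset.union_subset Finset.sdiff_subset (by simpa using ht),
      by simp, ?_, ?_⟩
    · -- Q (((Dn\N) ∪ {t}) ∪ Dx) since N\{t} is not necessary
      have hss : N \ {t} ⊂ N := Finset.sdiff_ssubset (by simpa using htN) (by simp)
      have := hNmin _ hss
      simp only [NecessarySet, not_and, not_not] at this
      have hQ' := this ((Finset.sdiff_subset).trans hNsub)
      have heq : (Dn ∪ Dx) \ (N \ {t}) = ((Dn \ N) ∪ {t}) ∪ Dx := by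
        ext x
        have hx1 : x ∈ N → x ∈ Dn := fun h => hNsub h
        have hx2 : x ∈ Dx → x ∉ Dn := fun h h' => Finset.disjoint_left.mp hdisj h' h
        have hx3 : x = t → x ∈ Dn := fun h => h ▸ ht
        simp only [Finset.mem_sdiff, Finset.mem_union, Finset.mem_singleton]
        tauto
      rwa [heq] at hQ'
    · -- ¬Q((A \ {t}) ∪ Dx) where A = (Dn\N) ∪ {t}
      have htDnN : t ∉ Dn \ N := fun h => (Finset.mem_sdiff.mp h).2 htN
      have heq2 : (((Dn \ N) ∪ {t}) \ {t}) ∪ Dx = (Dn ∪ Dx) \ N := by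
        ext x
        have hx1 : x ∈ N → x ∈ Dn := fun h => hNsub h
        have hx2 : x ∈ Dx → x ∉ Dn := fun h h' => Finset.disjoint_left.mp hdisj h' h
        have hx6 : x = t → x ∈ N := fun h => h ▸ htN
        simp only [Finset.mem_sdiff, Finset.mem_union, Finset.mem_singleton]
        tauto
      rw [heq2]
      exact hNnec
end

section
/- Let D = Dⁿ ∪ Dˣ be a database instance and Q a Boolean monotone query with Q(D). Every minimal sufficient-set for Q in D is a minimal hitting set of the collection of all minimal necessary-sets for Q in D. -/
open Classical

variable {α : Type*} [DecidableEq α]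

/-- `H` is a hitting set of the collection of sets satisfying `C`. -/
def HittingSet (C : Finset α → Prop) (H : Finset α) : Prop :=
  ∀ X, C X → (H ∩ X).Nonempty

theorem stmt1 (Q : Finset α → Prop)
    (hmono : ∀ S₁ S₂ : Finset α, S₁ ⊆ S₂ → Q S₁ → Q S₂)
    (Dn Dx : Finset α) (hdisj : Disjoint Dn Dx)
    (hQ : Q (Dn ∪ Dx)) (S : Finset α) (hS : MSS Q Dn Dx S) :
    HittingSet (MNS Q Dn Dx) S ∧ ∀ S' ⊂ S, ¬ HittingSet (MNS Q Dn Dx) S' := by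
  have hminex : ∀ N₀ : Finset α, NecessarySet Q Dn Dx N₀ →
      ∃ N, N ⊆ N₀ ∧ MNS Q Dn Dx N := by
    intro N₀ h₀
    obtain ⟨N, ⟨hNnec, hNsub⟩, hmin⟩ :=
      (wellFounded_lt (α := Finset α)).has_min
        {N | NecessarySet Q Dn Dx N ∧ N ⊆ N₀} ⟨N₀, h₀, subset_rfl⟩
    exact ⟨N, hNsub, hNnec, fun N' hN' hnec =>
      hmin N' ⟨hnec, hN'.subset.trans hNsub⟩ hN'⟩
  constructor
  · intro N hN
    by_contra hne
    have hdisjSN : ∀ a ∈ S, a ∉ N := by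
      intro a ha haN
      exact hne ⟨a, Finset.mem_inter.2 ⟨ha, haN⟩⟩
    have hsub : S ∪ Dx ⊆ (Dn ∪ Dx) \ N := by
      intro a ha
      rcases Finset.mem_union.1 ha with h | h
      · exact Finset.mem_sdiff.2 ⟨Finset.mem_union_left _ (hS.1.1 h), hdisjSN a h⟩
      · exact Finset.mem_sdiff.2 ⟨Finset.mem_union_right _ h,
          fun hc => hdisj.symm.forall_ne_finset h (hN.1.1 hc) rfl⟩
    exact hN.1.2 (hmono _ _ hsub hS.1.2)
  · intro S' hS' hhit
    obtain ⟨x, hxS, hxS'⟩ := Finset.exists_of_ssubset hS'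
    have hT : S \ {x} ⊂ S := Finset.sdiff_ssubset (by simp [hxS]) ⟨x, Finset.mem_singleton_self x⟩
    have hTsuf : ¬ Q ((S \ {x}) ∪ Dx) := fun h =>
      hS.2 _ hT ⟨(Finset.sdiff_subset).trans hS.1.1, h⟩
    have hN₀ : NecessarySet Q Dn Dx (Dn \ (S \ {x})) := by
      refine ⟨Finset.sdiff_subset, fun h => hTsuf (hmono _ _ ?_ h)⟩
      intro a ha
      rw [Finset.mem_sdiff, Finset.mem_union, Finset.mem_sdiff] at ha
      rcases ha.1 with h1 | h1
      · rcases Classical.em (a ∈ S \ {x}) with h2 | h2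
        · exact Finset.mem_union_left _ h2
        · exact absurd ⟨h1, h2⟩ ha.2
      · exact Finset.mem_union_right _ h1
    obtain ⟨N, hNsub, hNmns⟩ := hminex _ hN₀
    obtain ⟨a, ha⟩ := hhit N hNmns
    obtain ⟨haS', haN⟩ := Finset.mem_inter.1 ha
    have haS : a ∈ S \ {x} := Finset.mem_sdiff.2
      ⟨hS'.subset haS', by simp only [Finset.mem_singleton]; rintro rfl; exact hxS' haS'⟩
    exact (Finset.mem_sdiff.1 (hNsub haN)).2 haS
end

section
/- Let D = Dⁿ ∪ Dˣ be a database instance and Q a Boolean monotone query with Q(D). Every minimal necessary-set for Q in D is a minimal hitting set of the collection of all minimal sufficient-sets for Q in D. -/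
open Classical

variable {α : Type*} [DecidableEq α]

lemma exists_mss_subset (Q : Finset α → Prop) (Dn Dx : Finset α)
    (T : Finset α) (hT : SufficientSet Q Dn Dx T) :
    ∃ X ⊆ T, MSS Q Dn Dx X := by
  induction T using Finset.strongInductionOn with
  | _ T ih =>
    by_cases h : ∃ T' ⊂ T, SufficientSet Q Dn Dx T'
    · obtain ⟨T', hT', hsuf⟩ := h
      obtain ⟨X, hX, hmss⟩ := ih T' hT' hsuf
      exact ⟨X, hX.trans hT'.subset, hmss⟩
    · push_neg at h
      exact ⟨T, subset_rfl, hT, h⟩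

theorem stmt2 (Q : Finset α → Prop)
    (hmono : ∀ S₁ S₂ : Finset α, S₁ ⊆ S₂ → Q S₁ → Q S₂)
    (Dn Dx : Finset α) (hdisj : Disjoint Dn Dx)
    (hQ : Q (Dn ∪ Dx)) (S : Finset α) (hN : MNS Q Dn Dx S) :
    HittingSet (MSS Q Dn Dx) S ∧ ∀ S' ⊂ S, ¬ HittingSet (MSS Q Dn Dx) S' := by
  obtain ⟨⟨hSDn, hnQ⟩, hmin⟩ := hN
  constructor
  · intro X hX
    by_contra hemp
    rw [Finset.not_nonempty_iff_eq_empty, ← Finset.disjoint_iff_inter_eq_empty] at hemp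
    apply hnQ
    apply hmono (X ∪ Dx) _ _ hX.1.2
    intro a ha
    rw [Finset.mem_sdiff]
    rcases Finset.mem_union.1 ha with h | h
    · exact ⟨Finset.mem_union_left _ (hX.1.1 h), fun hc => Finset.disjoint_left.1 hemp hc h⟩
    · exact ⟨Finset.mem_union_right _ h, fun hc => Finset.disjoint_left.1 hdisj (hSDn hc) h⟩
  · intro S' hS' hhit
    have hS'Dn : S' ⊆ Dn := hS'.subset.trans hSDn
    have hnotnec := hmin S' hS'
    have hQ' : Q ((Dn ∪ Dx) \ S') := by
      by_contra h
      exact hnotnec ⟨hS'Dn, h⟩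
    have hsuf : SufficientSet Q Dn Dx (Dn \ S') := by
      refine ⟨Finset.sdiff_subset, hmono _ _ ?_ hQ'⟩
      intro a ha
      rw [Finset.mem_sdiff] at ha
      rw [Finset.mem_union, Finset.mem_sdiff]
      rcases Finset.mem_union.1 ha.1 with h | h
      · exact Or.inl ⟨h, ha.2⟩
      · exact Or.inr h
    obtain ⟨X, hXsub, hmss⟩ := exists_mss_subset Q Dn Dx _ hsuf
    obtain ⟨a, ha⟩ := hhit X hmss
    rw [Finset.mem_inter] at ha
    exact (Finset.mem_sdiff.1 (hXsub ha.2)).2 ha.1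
end

section
/- Let D = Dⁿ ∪ Dˣ be a database instance and Q a Boolean monotone query with Q(D). For every t ∈ Dⁿ and every Γ ⊆ Dⁿ with t ∉ Γ: Γ is a subset-minimal contingency set for t if and only if Γ ∪ {t} is a minimal necessary-set for Q in D. -/
open Classical

variable {α : Type*} [DecidableEq α]

/-- `Γ` is a contingency set for the endogenous tuple `t`:
`Γ ⊆ Dⁿ`, `t ∉ Γ`, `Q(D ∖ Γ)` and `¬ Q(D ∖ (Γ ∪ {t}))`, where `D = Dⁿ ∪ Dˣ`. -/
def Contingency (Q : Finset α → Prop) (Dn Dx : Finset α) (t : α) (Γ : Finset α) : Prop :=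
  Γ ⊆ Dn ∧ t ∉ Γ ∧ Q ((Dn ∪ Dx) \ Γ) ∧ ¬ Q ((Dn ∪ Dx) \ (Γ ∪ {t}))

theorem stmt3 (Q : Finset α → Prop)
    (hmono : ∀ S₁ S₂ : Finset α, S₁ ⊆ S₂ → Q S₁ → Q S₂)
    (Dn Dx : Finset α) (hdisj : Disjoint Dn Dx)
    (hQ : Q (Dn ∪ Dx)) (t : α) (ht : t ∈ Dn)
    (Γ : Finset α) (hΓ : Γ ⊆ Dn) (htΓ : t ∉ Γ) :
    (Contingency Q Dn Dx t Γ ∧ ∀ Γ' ⊂ Γ, ¬ Contingency Q Dn Dx t Γ')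
      ↔ MNS Q Dn Dx (Γ ∪ {t}) := by
  constructor
  · rintro ⟨⟨_, _, hQΓ, hnQ⟩, hmin⟩
    refine ⟨⟨Finset.union_subset hΓ (by simpa using ht), hnQ⟩, ?_⟩
    rintro N' hN' ⟨hN'sub, hN'nQ⟩
    by_cases htN' : t ∈ N'
    · set Γ' := N' \ {t} with hΓ'def
      have hN'eq : Γ' ∪ {t} = N' :=
        Finset.sdiff_union_of_subset (by simpa using htN')
      have hΓ'sub : Γ' ⊆ Γ := by
        intro x hx
        rw [hΓ'def, Finset.mem_sdiff, Finset.mem_singleton] at hx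
        have := hN'.1 hx.1
        rw [Finset.mem_union, Finset.mem_singleton] at this
        tauto
      have hΓ'ssub : Γ' ⊂ Γ := by
        refine ⟨hΓ'sub, fun hsub => hN'.2 ?_⟩
        rw [← hN'eq]
        exact Finset.union_subset_union_left hsub
      have hΓ'Q : Q ((Dn ∪ Dx) \ Γ') :=
        hmono _ _ (Finset.sdiff_subset_sdiff (le_refl _) hΓ'sub) hQΓ
      refine hmin Γ' hΓ'ssub ⟨hΓ'sub.trans hΓ, ?_, hΓ'Q, ?_⟩
      · rw [hΓ'def]; simp
      · rw [hN'eq]; exact hN'nQ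
    · have hsub : N' ⊆ Γ := by
        intro x hx
        have := hN'.1 hx
        rw [Finset.mem_union, Finset.mem_singleton] at this
        rcases this with h | h
        · exact h
        · exact absurd (h ▸ hx) htN'
      exact hN'nQ (hmono _ _ (Finset.sdiff_subset_sdiff (le_refl _) hsub) hQΓ)
  · rintro ⟨⟨hsub, hnQ⟩, hmin⟩
    have hΓssub : Γ ⊂ Γ ∪ {t} :=
      ⟨Finset.subset_union_left, fun h => htΓ (h (by simp))⟩
    have hQΓ : Q ((Dn ∪ Dx) \ Γ) := by
      by_contra hc
      exact hmin Γ hΓssub ⟨hΓ, hc⟩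
    refine ⟨⟨hΓ, htΓ, hQΓ, hnQ⟩, ?_⟩
    rintro Γ' hΓ' ⟨hΓ'sub, htΓ', _, hΓ'nQ⟩
    obtain ⟨x, hxΓ, hxΓ'⟩ := Finset.exists_of_ssubset hΓ'
    have hss : Γ' ∪ {t} ⊂ Γ ∪ {t} := by
      refine ⟨Finset.union_subset_union_left hΓ'.1, fun h => ?_⟩
      have hx : x ∈ Γ' ∪ {t} := h (Finset.mem_union_left _ hxΓ)
      rw [Finset.mem_union, Finset.mem_singleton] at hx
      rcases hx with h' | h'
      · exact hxΓ' h'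
      · exact htΓ (h' ▸ hxΓ)
    exact hmin _ hss ⟨Finset.union_subset hΓ'sub (by simpa using ht), hΓ'nQ⟩
end

section
/- Let D = Dⁿ ∪ Dˣ be a database instance and Q a Boolean monotone query with Q(D). If t ∈ Dⁿ is an actual cause for Q in D, then 1 plus the minimum cardinality of a contingency set for t equals the minimum cardinality of a minimal necessary-set containing t; consequently the causal responsibility ρ(t) = 1/(1 + min{|Γ| : Γ a contingency set for t}) equals the necessity-degree η(t) = 1/min{|N| : N a minimal necessary-set with t ∈ N}. -/
open Classical

variable {α : Type*} [DecidableEq α]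

theorem stmt4 (Q : Finset α → Prop)
    (hmono : ∀ S₁ S₂ : Finset α, S₁ ⊆ S₂ → Q S₁ → Q S₂)
    (Dn Dx : Finset α) (hdisj : Disjoint Dn Dx)
    (hQ : Q (Dn ∪ Dx)) (t : α) (ht : t ∈ Dn)
    (hcause : ∃ Γ, Contingency Q Dn Dx t Γ) :
    1 + sInf {n : ℕ | ∃ Γ, Contingency Q Dn Dx t Γ ∧ Γ.card = n}
        = sInf {n : ℕ | ∃ N, MNS Q Dn Dx N ∧ t ∈ N ∧ N.card = n} ∧
    (1 : ℚ) / (1 + ((sInf {n : ℕ | ∃ Γ, Contingency Q Dn Dx t Γ ∧ Γ.card = n} : ℕ) : ℚ))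
        = (1 : ℚ) / ((sInf {n : ℕ | ∃ N, MNS Q Dn Dx N ∧ t ∈ N ∧ N.card = n} : ℕ) : ℚ) := by
  set Sg : Set ℕ := {n : ℕ | ∃ Γ, Contingency Q Dn Dx t Γ ∧ Γ.card = n} with hSg
  set Sn : Set ℕ := {n : ℕ | ∃ N, MNS Q Dn Dx N ∧ t ∈ N ∧ N.card = n} with hSn
  -- Sg nonempty
  obtain ⟨Γ₀, hΓ₀⟩ := hcause
  have hSgne : Sg.Nonempty := ⟨Γ₀.card, Γ₀, hΓ₀, rfl⟩
  -- from any contingency set, build an MNS containing t of card ≤ card Γ + 1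
  have hbuild : ∀ Γ, Contingency Q Dn Dx t Γ →
      ∃ N, MNS Q Dn Dx N ∧ t ∈ N ∧ N.card ≤ Γ.card + 1 := by
    intro Γ ⟨hΓDn, htΓ, hQΓ, hnQΓt⟩
    set N₀ : Finset α := Γ ∪ {t} with hN₀
    have hN₀Dn : N₀ ⊆ Dn := by
      intro x hx
      rcases Finset.mem_union.mp hx with h | h
      · exact hΓDn h
      · simpa using Finset.mem_singleton.mp h ▸ ht
    have hN₀nec : NecessarySet Q Dn Dx N₀ := ⟨hN₀Dn, hnQΓt⟩
    -- pick a min-card necessary subset of N₀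
    classical
    set T : Finset (Finset α) :=
      N₀.powerset.filter (fun N' => NecessarySet Q Dn Dx N') with hT
    have hN₀T : N₀ ∈ T := by
      simp [hT, hN₀nec]
    obtain ⟨N, hNT, hNmin⟩ := T.exists_min_image Finset.card ⟨N₀, hN₀T⟩
    have hNsub : N ⊆ N₀ := Finset.mem_powerset.mp (Finset.mem_filter.mp hNT).1
    have hNnec : NecessarySet Q Dn Dx N := (Finset.mem_filter.mp hNT).2
    have hMNS : MNS Q Dn Dx N := by
      refine ⟨hNnec, fun N' hss hnec => ?_⟩
      have hN'T : N' ∈ T := by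
        simp only [hT, Finset.mem_filter, Finset.mem_powerset]
        exact ⟨hss.subset.trans hNsub, hnec⟩
      have := hNmin N' hN'T
      have hlt : N'.card < N.card := Finset.card_lt_card hss
      omega
    have htN : t ∈ N := by
      by_contra htN
      have hNΓ : N ⊆ Γ := by
        intro x hx
        rcases Finset.mem_union.mp (hNsub hx) with h | h
        · exact h
        · exact absurd (Finset.mem_singleton.mp h ▸ hx) htN
      exact hNnec.2 (hmono _ _ (Finset.sdiff_subset_sdiff le_rfl hNΓ) hQΓ)
    refine ⟨N, hMNS, htN, ?_⟩
    calc N.card ≤ N₀.card := Finset.card_le_card hNsub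
    _ ≤ Γ.card + 1 := by
        simpa [hN₀] using Finset.card_union_le Γ {t}
  have hSnne : Sn.Nonempty := by
    obtain ⟨N, hN, htN, _⟩ := hbuild Γ₀ hΓ₀
    exact ⟨N.card, N, hN, htN, rfl⟩
  -- b ≤ a + 1
  obtain ⟨Γ, hΓ, hΓcard⟩ := Nat.sInf_mem hSgne
  obtain ⟨N₁, hN₁, htN₁, hN₁card⟩ := hbuild Γ hΓ
  have h1 : sInf Sn ≤ sInf Sg + 1 := by
    have hmem : N₁.card ∈ Sn := ⟨N₁, hN₁, htN₁, rfl⟩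
    have := Nat.sInf_le hmem
    omega
  -- a + 1 ≤ b
  obtain ⟨N, hN, htN, hNcard⟩ := Nat.sInf_mem hSnne
  have hNpos : 0 < N.card := Finset.card_pos.mpr ⟨t, htN⟩
  have hcont : Contingency Q Dn Dx t (N.erase t) := by
    refine ⟨(N.erase_subset t).trans hN.1.1, Finset.notMem_erase t N, ?_, ?_⟩
    · have hss : N.erase t ⊂ N := Finset.erase_ssubset htN
      have := hN.2 _ hss
      by_contra hq
      exact this ⟨(N.erase_subset t).trans hN.1.1, hq⟩
    · have : N.erase t ∪ {t} = N := by
        ext x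
        simp only [Finset.mem_union, Finset.mem_erase, Finset.mem_singleton]
        constructor
        · rintro (⟨_, h⟩ | rfl) <;> [exact h; exact htN]
        · intro h; by_cases hx : x = t <;> simp [hx, h]
      rw [this]
      exact hN.1.2
  have h2 : sInf Sg + 1 ≤ sInf Sn := by
    have hmem : (N.erase t).card ∈ Sg := ⟨N.erase t, hcont, rfl⟩
    have := Nat.sInf_le hmem
    have hec : (N.erase t).card = N.card - 1 := Finset.card_erase_of_mem htN
    omega
  have heq : 1 + sInf Sg = sInf Sn := by omega
  refine ⟨heq, ?_⟩
  have hc : ((1 + sInf Sg : ℕ) : ℚ) = 1 + ((sInf Sg : ℕ) : ℚ) := by push_cast; ring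
  rw [← hc, heq]
end
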